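/- The tensor λ1·m1⊗q1 + λ2·m2⊗q2 + λ3·m3⊗q3, where m1 = I, m2 = diag(1,-1), m3 = [[0,1],[1,0]] and q1 = x²+y², q2 = x²-y², q3 = xy, is fixed by the elements (A,A,A) and (B,B,B) of SL_2 × SL_2 × SL_2 acting on ℂ²⊗Sym²ℂ²⊗ℂ² (first and third factors by the standard action on the 2×2 matrix part via M ↦ g₁ M g₃ᵀ, middle factor by change of variables on binary quadratics). -/
import Mathlib

open Matrix Complex

noncomputable section

/-- The matrix of binary quadratic forms representing the tensor
`λ₁·m₁⊗q₁ + λ₂·m₂⊗q₂ + λ₃·m₃⊗q₃` in `ℂ²⊗Sym²ℂ²⊗ℂ²`, evaluated at `(x,y)`. -/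
def Qtensor (l1 l2 l3 x y : ℂ) : Matrix (Fin 2) (Fin 2) ℂ :=
  !![l1 * (x ^ 2 + y ^ 2) + l2 * (x ^ 2 - y ^ 2), l3 * (x * y);
     l3 * (x * y), l1 * (x ^ 2 + y ^ 2) - l2 * (x ^ 2 - y ^ 2)]

/-- The action of `(g₁,g₂,g₃) ∈ SL₂³` on such a tensor:
`Q(x,y) ↦ g₁ · Q((x,y)·g₂) · g₃ᵀ`. -/
def actOn (g1 g2 g3 : Matrix (Fin 2) (Fin 2) ℂ) (Q : ℂ → ℂ → Matrix (Fin 2) (Fin 2) ℂ)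
    (x y : ℂ) : Matrix (Fin 2) (Fin 2) ℂ :=
  g1 * Q (x * g2 0 0 + y * g2 1 0) (x * g2 0 1 + y * g2 1 1) * g3ᵀ

/-- `A = [[i,0],[0,-i]]`. -/
def Amat : Matrix (Fin 2) (Fin 2) ℂ := !![I, 0; 0, -I]

/-- `B = [[0,1],[-1,0]]`. -/
def Bmat : Matrix (Fin 2) (Fin 2) ℂ := !![0, 1; -1, 0]

theorem tensor_fixed_by_AAA_and_BBB (l1 l2 l3 : ℂ) :
    (∀ x y : ℂ, actOn Amat Amat Amat (Qtensor l1 l2 l3) x y = Qtensor l1 l2 l3 x y) ∧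
      (∀ x y : ℂ, actOn Bmat Bmat Bmat (Qtensor l1 l2 l3) x y = Qtensor l1 l2 l3 x y) := by
  constructor <;> intro x y <;>
    · ext i j
      fin_cases i <;> fin_cases j <;>
        simp [actOn, Qtensor, Amat, Bmat, Matrix.mul_apply, Fin.sum_univ_two,
          Matrix.transpose_apply, Matrix.vecHead, Matrix.vecTail, Matrix.cons_val', Matrix.empty_val'] <;>
        ring_nf <;> simp [Complex.I_sq] <;> ring

end
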